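/- arXiv:0907.2718 — 2 statements merged into one kernel-verified Lean document; each statement's English description precedes it below -/
import Mathlib

section
/- The equilibrium input map P(X) = X + j S(X) - α₂ j S(α₁ j S(X)), where S(x) = 1/(1+k₀e^{-x}), is a smooth function of X whose derivative is P'(X) = 1 + j S'(X)(1 - α₁ α₂ j S'(α₁ j S(X))); in particular, if α₁ α₂ j² < 16 then P'(X) > 0 for all X, so the reduced Jansen–Rit system has a unique equilibrium for each input P. -/
/-- The equilibrium input map P(X) = X + jS(X) - α₂ j S(α₁ j S(X)) is smooth with
    P'(X) = 1 + jS'(X)(1 - α₁α₂ j S'(α₁ j S(X))); if α₁α₂ j² < 16 then P' > 0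
    everywhere and the reduced Jansen–Rit system has a unique equilibrium for each P. -/
theorem jansen_rit_equilibrium_map_derivative (j α₁ α₂ k₀ : ℝ)
    (hj : 0 < j) (h1 : 0 < α₁) (h2 : 0 < α₂) (hk : 0 < k₀)
    (S : ℝ → ℝ) (hS : ∀ x, S x = 1 / (1 + k₀ * Real.exp (-x)))
    (Pmap : ℝ → ℝ) (hP : ∀ X, Pmap X = X + j * S X - α₂ * j * S (α₁ * j * S X)) :
    ContDiff ℝ (⊤ : ℕ∞) Pmap ∧
    (∀ X, deriv Pmap X = 1 + j * deriv S X * (1 - α₁ * α₂ * j * deriv S (α₁ * j * S X))) ∧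
    (α₁ * α₂ * j ^ 2 < 16 →
      (∀ X, 0 < deriv Pmap X) ∧ ∀ P : ℝ, ∃! X : ℝ, Pmap X = P) := by
  have hden : ∀ x : ℝ, 0 < 1 + k₀ * Real.exp (-x) := fun x => by positivity
  have hSfun : S = fun x => (1 + k₀ * Real.exp (-x))⁻¹ := funext fun x => by rw [hS, one_div]
  have hPfun : Pmap = fun X => X + j * S X - α₂ * j * S (α₁ * j * S X) := funext hP
  set s' : ℝ → ℝ := fun x => k₀ * Real.exp (-x) / (1 + k₀ * Real.exp (-x)) ^ 2 with hs'
  have hSderiv : ∀ x : ℝ, HasDerivAt S (s' x) x := by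
    intro x
    rw [hSfun]
    have h0 : HasDerivAt (fun y : ℝ => 1 + k₀ * Real.exp (-y)) (-(k₀ * Real.exp (-x))) x := by
      have he : HasDerivAt (fun y : ℝ => Real.exp (-y)) (-(Real.exp (-x))) x := by
        simpa [Function.comp_def] using (Real.hasDerivAt_exp (-x)).comp x (hasDerivAt_neg x)
      simpa [mul_comm, mul_left_comm, Pi.add_def] using (hasDerivAt_const x (1:ℝ)).add (he.const_mul k₀)
    have := h0.inv (ne_of_gt (hden x))
    simpa [hs', neg_div, Pi.inv_def] using this
  have hsderiv_eq : ∀ x, deriv S x = s' x := fun x => (hSderiv x).deriv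
  have hs'pos : ∀ x, 0 < s' x := fun x => by
    have := hden x; have := Real.exp_pos (-x); positivity
  have hs'le : ∀ x, s' x ≤ 1 / 4 := by
    intro x
    have ht : 0 < k₀ * Real.exp (-x) := by positivity
    rw [hs', div_le_iff₀ (by positivity)]
    nlinarith [sq_nonneg (1 - k₀ * Real.exp (-x))]
  have hSpos : ∀ x, 0 < S x := fun x => by
    rw [hS]; exact div_pos one_pos (hden x)
  have hSlt : ∀ x, S x < 1 := fun x => by
    rw [hS]
    rw [div_lt_one (hden x)]
    have := Real.exp_pos (-x); nlinarith
  have hScd : ContDiff ℝ (⊤ : ℕ∞) S := by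
    rw [hSfun]
    exact (contDiff_const.add (contDiff_const.mul (Real.contDiff_exp.comp contDiff_id.neg))).inv
      fun x => (hden x).ne'
  have hPcd : ContDiff ℝ (⊤ : ℕ∞) Pmap := by
    rw [hPfun]
    exact ((contDiff_id.add (contDiff_const.mul hScd)).sub
      (contDiff_const.mul (hScd.comp (contDiff_const.mul hScd))))
  have hPderiv : ∀ X : ℝ, HasDerivAt Pmap
      (1 + j * s' X - α₂ * j * (s' (α₁ * j * S X) * (α₁ * j * s' X))) X := by
    intro X
    rw [hPfun]
    have hinner : HasDerivAt (fun Y : ℝ => S (α₁ * j * S Y))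
        (s' (α₁ * j * S X) * (α₁ * j * s' X)) X :=
      (hSderiv (α₁ * j * S X)).comp X ((hSderiv X).const_mul (α₁ * j))
    exact ((hasDerivAt_id X).add ((hSderiv X).const_mul j)).sub (hinner.const_mul (α₂ * j))
  have hPderiv_eq : ∀ X, deriv Pmap X =
      1 + j * deriv S X * (1 - α₁ * α₂ * j * deriv S (α₁ * j * S X)) := by
    intro X
    rw [(hPderiv X).deriv, hsderiv_eq, hsderiv_eq]
    ring
  refine ⟨hPcd, hPderiv_eq, fun h16 => ?_⟩
  have hpos : ∀ X, 0 < deriv Pmap X := by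
    intro X
    rw [hPderiv_eq, hsderiv_eq, hsderiv_eq]
    have c1 := hs'pos X
    have c2 := hs'le X
    have d1 := hs'pos (α₁ * j * S X)
    have d2 := hs'le (α₁ * j * S X)
    nlinarith [mul_pos c1 d1, mul_pos (mul_pos h1 h2) (mul_pos hj hj)]
  refine ⟨hpos, fun P => ?_⟩
  have hmono : StrictMono Pmap := strictMono_of_deriv_pos hpos
  have hab : P - j ≤ P + α₂ * j := by nlinarith
  have hcont : ContinuousOn Pmap (Set.Icc (P - j) (P + α₂ * j)) :=
    hPcd.continuous.continuousOn
  have hmem : P ∈ Set.Icc (Pmap (P - j)) (Pmap (P + α₂ * j)) := by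
    constructor
    · rw [hP]
      nlinarith [mul_lt_mul_of_pos_left (hSlt (P - j)) hj,
        mul_pos (mul_pos h2 hj) (hSpos (α₁ * j * S (P - j)))]
    · rw [hP]
      nlinarith [mul_pos hj (hSpos (P + α₂ * j)),
        mul_lt_mul_of_pos_left (hSlt (α₁ * j * S (P + α₂ * j))) (mul_pos h2 hj)]
  obtain ⟨X, _, hX⟩ := intermediate_value_Icc hab hcont hmem
  exact ⟨X, hX, fun Y hY => hmono.injective (hY.trans hX.symm)⟩
end

section
/- A point of the 10-dimensional reduced Wendling–Chauvel system is an equilibrium if and only if Y₅ = Y₆ = Y₇ = Y₈ = Y₉ = 0 and there exists X ∈ ℝ with Y₀ = jS(X), Y₂ = (jG₁α₄/d₁) S(α₃ jS(X)), Z = α₅ jS(X) - (jG₁α₆/d₁) S(α₃ jS(X)), Y₃ = (jG₂α₇/d₂) S(Z), and P = X + Y₂ + Y₃ - α₂ j S(α₁ j S(X)). -/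
/-!
At an equilibrium every velocity vanishes, and each second-order synaptic equation
`ÿ = d G s - 2 d ẏ - d² y` then forces `y = (G / d) s`. The variable `Y₉` is the velocity of the
hidden potential `(α₅ Y₀ - Z) / α₆`, so its equation determines `Z`. The system is triangular:
`X` fixes `Y₀`, which fixes `Y₂` and `Z`, which fixes `Y₃`, and the `Y₆`-equation then fixes `P`.
-/

theorem critically_damped_rest_iff {𝕜 : Type*} [Field 𝕜] {d G s y : 𝕜} (hd : d ≠ 0) :
    d * G * s - d ^ 2 * y = 0 ↔ y = G / d * s := by
  rw [div_mul_eq_mul_div, eq_div_iff hd, show d * G * s - d ^ 2 * y = d * (G * s - y * d) by ring,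
    mul_eq_zero, or_iff_right hd, sub_eq_zero, eq_comm]

theorem wendling_chauvel_equilibria_general
    (j P d₁ d₂ G₁ G₂ α₁ α₂ α₃ α₄ α₅ α₆ α₇ : ℝ)
    (hd₁ : 0 < d₁) (hd₂ : 0 < d₂) (h6 : 0 < α₆)
    (S : ℝ → ℝ)
    (Y₀ X Y₂ Y₃ Z Y₅ Y₆ Y₇ Y₈ Y₉ : ℝ) :
    (Y₅ = 0 ∧
     Y₆ - Y₇ - Y₈ = 0 ∧
     Y₇ = 0 ∧
     Y₈ = 0 ∧
     α₅ * Y₅ - α₆ * Y₉ = 0 ∧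
     j * S X - 2 * Y₅ - Y₀ = 0 ∧
     j * α₂ * S (α₁ * Y₀) - 2 * Y₆ - (X + Y₂ + Y₃) + P = 0 ∧
     j * d₁ * G₁ * α₄ * S (α₃ * Y₀) - 2 * d₁ * Y₇ - d₁ ^ 2 * Y₂ = 0 ∧
     j * d₂ * G₂ * α₇ * S Z - 2 * d₂ * Y₈ - d₂ ^ 2 * Y₃ = 0 ∧
     j * d₁ * G₁ * S (α₃ * Y₀) - 2 * d₁ * Y₉ - d₁ ^ 2 * (α₅ * Y₀ - Z) / α₆ = 0)
    ↔
    (Y₅ = 0 ∧ Y₆ = 0 ∧ Y₇ = 0 ∧ Y₈ = 0 ∧ Y₉ = 0 ∧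
     Y₀ = j * S X ∧
     Y₂ = j * G₁ * α₄ / d₁ * S (α₃ * (j * S X)) ∧
     Z = α₅ * (j * S X) - j * G₁ * α₆ / d₁ * S (α₃ * (j * S X)) ∧
     Y₃ = j * G₂ * α₇ / d₂ * S Z ∧
     P = X + Y₂ + Y₃ - α₂ * j * S (α₁ * (j * S X))) := by
  have hZ_iff : ∀ y : ℝ,
      Z = α₅ * y - j * G₁ * α₆ / d₁ * S (α₃ * y) ↔
        (α₅ * y - Z) / α₆ = j * G₁ / d₁ * S (α₃ * y) := fun y => by
    rw [div_eq_iff h6.ne']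
    constructor <;> intro h <;> linear_combination -h
  constructor
  · rintro ⟨rfl, h₆, rfl, rfl, h₉, h₀, hP, h₂, h₃, hZ⟩
    obtain rfl : Y₆ = 0 := by linarith
    obtain rfl : Y₉ = 0 := by simpa [h6.ne'] using h₉
    obtain rfl : Y₀ = j * S X := by linarith
    refine ⟨rfl, rfl, rfl, rfl, rfl, rfl, (critically_damped_rest_iff hd₁.ne').1 ?_,
      (hZ_iff _).2 ((critically_damped_rest_iff hd₁.ne').1 ?_),
      (critically_damped_rest_iff hd₂.ne').1 ?_, by linarith⟩
    · linear_combination h₂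
    · linear_combination hZ
    · linear_combination h₃
  · rintro ⟨rfl, rfl, rfl, rfl, rfl, rfl, h₂, hZ, h₃, rfl⟩
    refine ⟨rfl, by ring, rfl, rfl, by ring, by ring, by ring, ?_, ?_, ?_⟩
    · linear_combination (critically_damped_rest_iff hd₁.ne').2 h₂
    · linear_combination (critically_damped_rest_iff hd₂.ne').2 h₃
    · linear_combination (critically_damped_rest_iff hd₁.ne').2 ((hZ_iff _).1 hZ)

/-- Equilibria of the reduced 10-dimensional Wendling–Chauvel system are exactly
    the points with Y₅ = ⋯ = Y₉ = 0 parametrized by X via the stated relations. -/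
theorem wendling_chauvel_equilibria
    (j P d₁ d₂ G₁ G₂ α₁ α₂ α₃ α₄ α₅ α₆ α₇ k₀ : ℝ)
    (hj : 0 < j) (hd₁ : 0 < d₁) (hd₂ : 0 < d₂) (hG₁ : 0 < G₁) (hG₂ : 0 < G₂)
    (h1 : 0 < α₁) (h2 : 0 < α₂) (h3 : 0 < α₃) (h4 : 0 < α₄)
    (h5 : 0 < α₅) (h6 : 0 < α₆) (h7 : 0 < α₇) (hk : 0 < k₀)
    (S : ℝ → ℝ) (hS : ∀ x, S x = 1 / (1 + k₀ * Real.exp (-x)))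
    (Y₀ X Y₂ Y₃ Z Y₅ Y₆ Y₇ Y₈ Y₉ : ℝ) :
    (Y₅ = 0 ∧
     Y₆ - Y₇ - Y₈ = 0 ∧
     Y₇ = 0 ∧
     Y₈ = 0 ∧
     α₅ * Y₅ - α₆ * Y₉ = 0 ∧
     j * S X - 2 * Y₅ - Y₀ = 0 ∧
     j * α₂ * S (α₁ * Y₀) - 2 * Y₆ - (X + Y₂ + Y₃) + P = 0 ∧
     j * d₁ * G₁ * α₄ * S (α₃ * Y₀) - 2 * d₁ * Y₇ - d₁ ^ 2 * Y₂ = 0 ∧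
     j * d₂ * G₂ * α₇ * S Z - 2 * d₂ * Y₈ - d₂ ^ 2 * Y₃ = 0 ∧
     j * d₁ * G₁ * S (α₃ * Y₀) - 2 * d₁ * Y₉ - d₁ ^ 2 * (α₅ * Y₀ - Z) / α₆ = 0)
    ↔
    (Y₅ = 0 ∧ Y₆ = 0 ∧ Y₇ = 0 ∧ Y₈ = 0 ∧ Y₉ = 0 ∧
     Y₀ = j * S X ∧
     Y₂ = j * G₁ * α₄ / d₁ * S (α₃ * (j * S X)) ∧
     Z = α₅ * (j * S X) - j * G₁ * α₆ / d₁ * S (α₃ * (j * S X)) ∧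
     Y₃ = j * G₂ * α₇ / d₂ * S Z ∧
     P = X + Y₂ + Y₃ - α₂ * j * S (α₁ * (j * S X))) :=
  wendling_chauvel_equilibria_general j P d₁ d₂ G₁ G₂ α₁ α₂ α₃ α₄ α₅ α₆ α₇ hd₁ hd₂ h6 S Y₀ X Y₂ Y₃ Z
    Y₅ Y₆ Y₇ Y₈ Y₉
end
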